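/- Fix λ > 0. There exists N such that for all integers n ≥ N the following holds. Let (ξ_i)_{i≥1} be i.i.d. random variables with the Binomial(n, p) distribution, where p = (1 + λ·n^{-1/3})/n. Set S_0 = 1 and S_t = 1 + Σ_{i=1}^{t}(ξ_i − 1), let H = ⌈n^{1/3}⌉, and let γ = min{t ≥ 1 : S_t ≥ H or S_t = 0}. Then P(S_γ ≥ H) ≤ 4λ·n^{-1/3}/(1 − e^{−4λ}). -/

import Mathlib

open MeasureTheory ProbabilityTheory
open scoped ENNReal

/-- The Binomial(n,p) distribution, as a measure on `ℕ`. -/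
noncomputable def binomialMeasure (n : ℕ) (p : ℝ) : Measure ℕ :=
  Measure.sum fun k : ℕ =>
    (ENNReal.ofReal ((n.choose k : ℝ) * p ^ k * (1 - p) ^ (n - k))) • Measure.dirac k

/-- The random walk `S_t = 1 + ∑_{i=1}^t (ξ_i - 1)`. -/
def walk {Ω : Type*} (ξ : ℕ → Ω → ℕ) (t : ℕ) (ω : Ω) : ℤ :=
  1 + ∑ i ∈ Finset.Icc 1 t, ((ξ i ω : ℤ) - 1)

/-- The stopping time `γ = min {t ≥ 1 : S_t ≥ H or S_t = 0}`. -/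
noncomputable def hitTime {Ω : Type*} (ξ : ℕ → Ω → ℕ) (H : ℕ) (ω : Ω) : ℕ :=
  sInf {t | 1 ≤ t ∧ ((H : ℤ) ≤ walk ξ t ω ∨ walk ξ t ω = 0)}

/-!
Put `a = 4λ n^{-1/3}`, so that `np = 1 + a/4`. For large `n` the exponential moment
`E e^{-a(ξ-1)} = e^a (1 - p + p e^{-a})^n` is at least `1`: its logarithm is
`a²/4 + O(a³ + a²/n)`, the quadratic term `a²/2` of the exponential beating the drift term
`a (np - 1) = a²/4`. Hence `e^{-a S_{t∧γ}}` is a submartingale and `e^{-a} ≤ E e^{-a S_{t∧γ}}`.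
The stopped walk is nonnegative, and at least `H` on the event in question, so
`e^{-a} ≤ 1 - (1 - e^{-aH}) P(S_{t∧γ} ≥ H)`. Letting `t → ∞`, and using `1 - e^{-a} ≤ a` and
`aH ≥ 4λ`, gives the bound.
-/

open Finset

section Path

variable {Ω : Type*} (ξ : ℕ → Ω → ℕ) (H : ℕ)

def ExitsAt (t : ℕ) (ω : Ω) : Prop :=
  (H : ℤ) ≤ walk ξ t ω ∨ walk ξ t ω = 0

/-- The event `{γ > t}`. -/
def notExited (t : ℕ) : Set Ω :=
  {ω | ∀ s ∈ Icc 1 t, ¬ExitsAt ξ H s ω}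

/-- The stopped walk `S_{t ∧ γ}`, written as the transform of the increments by the
predictable indicators `1{γ ≥ i}`. -/
noncomputable def stoppedWalk (t : ℕ) (ω : Ω) : ℤ :=
  1 + ∑ i ∈ Icc 1 t, (notExited ξ H (i - 1)).indicator (fun ω ↦ (ξ i ω : ℤ) - 1) ω

variable {ξ H}

@[simp]
lemma walk_zero (ω : Ω) : walk ξ 0 ω = 1 := by
  simp [walk]

lemma walk_succ (t : ℕ) (ω : Ω) : walk ξ (t + 1) ω = walk ξ t ω + ((ξ (t + 1) ω : ℤ) - 1) := by
  rw [walk, walk, sum_Icc_succ_top (Nat.le_add_left 1 t), add_assoc]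

lemma mem_notExited_succ {t : ℕ} {ω : Ω} :
    ω ∈ notExited ξ H (t + 1) ↔ ω ∈ notExited ξ H t ∧ ¬ExitsAt ξ H (t + 1) ω := by
  simp only [notExited, mem_Icc]
  refine ⟨fun h ↦ ⟨fun s hs ↦ h s ⟨hs.1, by omega⟩, h (t + 1) ⟨by omega, le_rfl⟩⟩, ?_⟩
  rintro ⟨h, hexit⟩ s ⟨hs₁, hs₂⟩
  rcases Nat.lt_or_ge s (t + 1) with hs | hs
  · exact h s ⟨hs₁, by omega⟩
  · rwa [show s = t + 1 by omega]

lemma notExited_antitone : Antitone (notExited ξ H) :=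
  antitone_nat_of_succ_le fun _ _ hω ↦ (mem_notExited_succ.mp hω).1

lemma one_le_walk_of_mem_notExited {t : ℕ} {ω : Ω} (h : ω ∈ notExited ξ H t) :
    1 ≤ walk ξ t ω := by
  induction t with
  | zero => simp
  | succ t ih =>
    obtain ⟨h, hexit⟩ := mem_notExited_succ.mp h
    have := ih h
    have := walk_succ (ξ := ξ) t ω
    simp only [ExitsAt, not_or] at hexit
    omega

lemma walk_lt_of_mem_notExited (hH : 2 ≤ H) {t : ℕ} {ω : Ω} (h : ω ∈ notExited ξ H t) :
    walk ξ t ω < H := by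
  cases t with
  | zero => simp only [walk_zero]; omega
  | succ t =>
    have hexit := (mem_notExited_succ.mp h).2
    simp only [ExitsAt, not_or] at hexit
    omega

@[simp]
lemma stoppedWalk_zero (ω : Ω) : stoppedWalk ξ H 0 ω = 1 := by
  simp [stoppedWalk]

lemma stoppedWalk_succ (t : ℕ) (ω : Ω) :
    stoppedWalk ξ H (t + 1) ω =
      stoppedWalk ξ H t ω + (notExited ξ H t).indicator (fun ω ↦ (ξ (t + 1) ω : ℤ) - 1) ω := by
  rw [stoppedWalk, stoppedWalk, sum_Icc_succ_top (Nat.le_add_left 1 t), add_assoc,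
    Nat.add_sub_cancel]

lemma stoppedWalk_succ_eq_walk {t : ℕ} {ω : Ω} (h : ω ∈ notExited ξ H t) :
    stoppedWalk ξ H (t + 1) ω = walk ξ (t + 1) ω := by
  induction t with
  | zero => simp [stoppedWalk_succ, walk_succ, Set.indicator_of_mem h]
  | succ t ih =>
    rw [stoppedWalk_succ, Set.indicator_of_mem h, ih (notExited_antitone (Nat.le_succ t) h),
      walk_succ (t + 1)]

lemma stoppedWalk_eq_walk {t : ℕ} {ω : Ω} (h : ω ∈ notExited ξ H t) :
    stoppedWalk ξ H t ω = walk ξ t ω := by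
  cases t with
  | zero => simp
  | succ t => exact stoppedWalk_succ_eq_walk (notExited_antitone (Nat.le_succ t) h)

lemma stoppedWalk_nonneg (t : ℕ) (ω : Ω) : 0 ≤ stoppedWalk ξ H t ω := by
  induction t with
  | zero => simp
  | succ t ih =>
    by_cases h : ω ∈ notExited ξ H t
    · rw [stoppedWalk_succ_eq_walk h, walk_succ]
      have := one_le_walk_of_mem_notExited h
      omega
    · rwa [stoppedWalk_succ, Set.indicator_of_notMem h, add_zero]

lemma stoppedWalk_eq_of_notMem {t u : ℕ} {ω : Ω} (h : ω ∉ notExited ξ H t) (htu : t ≤ u) :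
    stoppedWalk ξ H u ω = stoppedWalk ξ H t ω := by
  induction u, htu using Nat.le_induction with
  | base => rfl
  | succ u htu ih =>
    rw [stoppedWalk_succ, Set.indicator_of_notMem fun hu ↦ h (notExited_antitone htu hu),
      add_zero, ih]

lemma monotone_setOf_le_stoppedWalk (hH : 2 ≤ H) :
    Monotone fun t ↦ {ω | (H : ℤ) ≤ stoppedWalk ξ H t ω} := by
  intro t u htu ω (hω : (H : ℤ) ≤ stoppedWalk ξ H t ω)
  have hexited : ω ∉ notExited ξ H t := fun h ↦ by
    have := walk_lt_of_mem_notExited hH h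
    rw [stoppedWalk_eq_walk h] at hω
    omega
  show (H : ℤ) ≤ stoppedWalk ξ H u ω
  rwa [stoppedWalk_eq_of_notMem hexited htu]

lemma mem_notExited_hitTime_sub_one (ω : Ω) : ω ∈ notExited ξ H (hitTime ξ H ω - 1) := by
  intro s hs hexit
  rw [mem_Icc] at hs
  have hlt : s < hitTime ξ H ω := by omega
  exact Nat.notMem_of_lt_sInf hlt ⟨hs.1, hexit⟩

lemma setOf_le_walk_hitTime_subset (hH : 2 ≤ H) :
    {ω | (H : ℤ) ≤ walk ξ (hitTime ξ H ω) ω} ⊆ ⋃ t, {ω | (H : ℤ) ≤ stoppedWalk ξ H t ω} := by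
  intro ω hω
  -- `hitTime` is `sInf ∅ = 0` on paths that never exit; there `S_0 = 1 < H`.
  obtain ⟨t, ht⟩ : ∃ t, hitTime ξ H ω = t + 1 := by
    refine Nat.exists_eq_add_one.mpr (Nat.pos_of_ne_zero fun h ↦ ?_)
    have : (H : ℤ) ≤ walk ξ 0 ω := h ▸ hω
    simp only [walk_zero] at this
    omega
  have hsurv : ω ∈ notExited ξ H t := by
    simpa [ht] using mem_notExited_hitTime_sub_one (ξ := ξ) (H := H) ω
  refine Set.mem_iUnion.mpr ⟨t + 1, ?_⟩
  show (H : ℤ) ≤ stoppedWalk ξ H (t + 1) ω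
  rw [stoppedWalk_succ_eq_walk hsurv, ← ht]
  exact hω

end Path

section Measurability

variable {Ω : Type*} {m : MeasurableSpace Ω} {ξ : ℕ → Ω → ℕ} {t : ℕ}

lemma measurable_walk (hξ : ∀ i ≤ t, Measurable[m] (ξ i)) : Measurable[m] (walk ξ t) :=
  (Finset.measurable_sum _ fun i hi ↦
    (measurable_from_top (f := fun k : ℕ ↦ (k : ℤ) - 1)).comp (hξ i (mem_Icc.mp hi).2)).const_add 1

lemma measurableSet_notExited (H : ℕ) (hξ : ∀ i ≤ t, Measurable[m] (ξ i)) :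
    MeasurableSet[m] (notExited ξ H t) := by
  have : notExited ξ H t = ⋂ s ∈ Icc 1 t, walk ξ s ⁻¹' {z | ¬((H : ℤ) ≤ z ∨ z = 0)} := by
    ext ω
    simp [notExited, ExitsAt]
  rw [this]
  exact .biInter (Icc 1 t).countable_toSet fun s hs ↦
    measurable_walk (fun i hi ↦ hξ i (hi.trans (mem_Icc.mp hs).2)) .of_discrete

lemma measurable_stoppedWalk (H : ℕ) (hξ : ∀ i ≤ t, Measurable[m] (ξ i)) :
    Measurable[m] (stoppedWalk ξ H t) := by
  refine (Finset.measurable_sum _ fun i hi ↦ ?_).const_add 1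
  obtain ⟨-, hit⟩ := mem_Icc.mp hi
  exact ((measurable_from_top (f := fun k : ℕ ↦ (k : ℤ) - 1)).comp (hξ i hit)).indicator
    (measurableSet_notExited H fun j hj ↦ hξ j (by omega))

end Measurability

section Past

variable {Ω : Type*} {ξ : ℕ → Ω → ℕ}

abbrev pastSigma (ξ : ℕ → Ω → ℕ) (t : ℕ) : MeasurableSpace Ω :=
  ⨆ i ∈ Set.Iic t, MeasurableSpace.comap (ξ i) inferInstance

lemma measurable_pastSigma {t i : ℕ} (hi : i ≤ t) : Measurable[pastSigma ξ t] (ξ i) :=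
  (comap_measurable (ξ i)).mono
    (le_iSup₂ (f := fun j (_ : j ∈ Set.Iic t) ↦ MeasurableSpace.comap (ξ j) inferInstance) i hi)
    le_rfl

variable [MeasurableSpace Ω]

lemma pastSigma_le (hξ : ∀ i, Measurable (ξ i)) (t : ℕ) : pastSigma ξ t ≤ ‹MeasurableSpace Ω› :=
  iSup₂_le fun i _ ↦ (hξ i).comap_le

lemma indep_pastSigma_succ {μ : Measure Ω} (hξ : ∀ i, Measurable (ξ i)) (hind : iIndepFun ξ μ)
    (t : ℕ) : Indep (pastSigma ξ t) (MeasurableSpace.comap (ξ (t + 1)) inferInstance) μ := by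
  unfold pastSigma
  simpa using indep_iSup_of_disjoint (fun i ↦ (hξ i).comap_le) hind.iIndep
    (S := Set.Iic t) (T := {t + 1}) (by simp)

end Past

lemma measure_le_of_ofReal_le_lintegral {Ω : Type*} [MeasurableSpace Ω] {μ : Measure Ω}
    [IsProbabilityMeasure μ] {f : Ω → ℝ≥0∞} {A : Set Ω} (hA : MeasurableSet A) {c d : ℝ}
    (hc₀ : 0 ≤ c) (hc₁ : c < 1) (hfA : ∀ ω ∈ A, f ω ≤ ENNReal.ofReal c) (hf : ∀ ω, f ω ≤ 1)
    (hd : ENNReal.ofReal d ≤ ∫⁻ ω, f ω ∂μ) :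
    μ A ≤ ENNReal.ofReal ((1 - d) / (1 - c)) := by
  set r := μ.real A
  have hr₁ : r ≤ 1 := measureReal_le_one
  have hμA : μ A = ENNReal.ofReal r := (ENNReal.ofReal_toReal (measure_ne_top μ A)).symm
  have hsplit : ∫⁻ ω, f ω ∂μ ≤ ENNReal.ofReal (c * r + (1 - r)) := by
    calc ∫⁻ ω, f ω ∂μ = ∫⁻ ω in A, f ω ∂μ + ∫⁻ ω in Aᶜ, f ω ∂μ := (lintegral_add_compl f hA).symm
      _ ≤ ∫⁻ _ in A, ENNReal.ofReal c ∂μ + ∫⁻ _ in Aᶜ, 1 ∂μ :=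
        add_le_add (setLIntegral_mono' hA hfA) (setLIntegral_mono' hA.compl fun ω _ ↦ hf ω)
      _ = ENNReal.ofReal (c * r + (1 - r)) := by
        rw [setLIntegral_const, setLIntegral_const, one_mul, prob_compl_eq_one_sub hA, hμA,
          ← ENNReal.ofReal_one, ← ENNReal.ofReal_sub _ measureReal_nonneg,
          ← ENNReal.ofReal_mul hc₀, ← ENNReal.ofReal_add (by positivity) (by linarith)]
  have hd' : d ≤ c * r + (1 - r) :=
    (ENNReal.ofReal_le_ofReal_iff (by nlinarith [measureReal_nonneg (μ := μ) (s := A)])).mp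
      (hd.trans hsplit)
  rw [hμA]
  exact ENNReal.ofReal_le_ofReal ((le_div_iff₀ (by linarith)).mpr (by nlinarith))

section Submartingale

variable {Ω : Type*} [MeasurableSpace Ω] {μ : Measure Ω} {ξ : ℕ → Ω → ℕ} {H : ℕ} {a : ℝ}

lemma lintegral_exp_stoppedWalk_le_succ (hξ : ∀ i, Measurable (ξ i)) (hind : iIndepFun ξ μ)
    (t : ℕ) (hstep : 1 ≤ ∫⁻ ω, ENNReal.ofReal (Real.exp (-a * ((ξ (t + 1) ω : ℝ) - 1))) ∂μ) :
    ∫⁻ ω, ENNReal.ofReal (Real.exp (-a * stoppedWalk ξ H t ω)) ∂μ ≤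
      ∫⁻ ω, ENNReal.ofReal (Real.exp (-a * stoppedWalk ξ H (t + 1) ω)) ∂μ := by
  set B := notExited ξ H t
  set Y := fun ω ↦ ENNReal.ofReal (Real.exp (-a * stoppedWalk ξ H t ω))
  set Z := fun ω ↦ ENNReal.ofReal (Real.exp (-a * ((ξ (t + 1) ω : ℝ) - 1)))
  have hB : MeasurableSet B := measurableSet_notExited H fun i _ ↦ hξ i
  have hproduct : ∫⁻ ω in B, Y ω * Z ω ∂μ = (∫⁻ ω in B, Y ω ∂μ) * ∫⁻ ω, Z ω ∂μ := by
    simp only [← lintegral_indicator hB, Set.indicator_mul_left]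
    rw [lintegral_mul_eq_lintegral_mul_lintegral_of_independent_measurableSpace
      (f := B.indicator Y) (g := Z) (pastSigma_le hξ t) (hξ (t + 1)).comap_le
      (indep_pastSigma_succ hξ hind t)
      (((measurable_from_top (f := fun z : ℤ ↦ ENNReal.ofReal (Real.exp (-a * z)))).comp
        (measurable_stoppedWalk H fun _ ↦ measurable_pastSigma)).indicator
        (measurableSet_notExited H fun _ ↦ measurable_pastSigma))
      ((measurable_from_top (f := fun k : ℕ ↦ ENNReal.ofReal (Real.exp (-a * ((k : ℝ) - 1))))).comp
        (comap_measurable (ξ (t + 1))))]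
  have hon : ∀ ω ∈ B, ENNReal.ofReal (Real.exp (-a * stoppedWalk ξ H (t + 1) ω)) =
      Y ω * Z ω := fun ω hω ↦ by
    rw [← ENNReal.ofReal_mul (Real.exp_nonneg _), ← Real.exp_add,
      stoppedWalk_succ, Set.indicator_of_mem hω]
    push_cast
    ring_nf
  have hoff : ∀ ω ∈ Bᶜ, ENNReal.ofReal (Real.exp (-a * stoppedWalk ξ H (t + 1) ω)) = Y ω :=
    fun ω hω ↦ by rw [stoppedWalk_succ, Set.indicator_of_notMem hω, add_zero]
  calc ∫⁻ ω, Y ω ∂μ = (∫⁻ ω in B, Y ω ∂μ) * 1 + ∫⁻ ω in Bᶜ, Y ω ∂μ := by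
        rw [mul_one, lintegral_add_compl _ hB]
    _ ≤ (∫⁻ ω in B, Y ω ∂μ) * ∫⁻ ω, Z ω ∂μ + ∫⁻ ω in Bᶜ, Y ω ∂μ := by gcongr
    _ = ∫⁻ ω, ENNReal.ofReal (Real.exp (-a * stoppedWalk ξ H (t + 1) ω)) ∂μ := by
        rw [← hproduct, ← setLIntegral_congr_fun hB hon, ← setLIntegral_congr_fun hB.compl hoff,
          lintegral_add_compl _ hB]

variable [IsProbabilityMeasure μ]

lemma ofReal_exp_neg_le_lintegral_exp_stoppedWalk (hξ : ∀ i, Measurable (ξ i))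
    (hind : iIndepFun ξ μ)
    (hstep : ∀ i, 1 ≤ ∫⁻ ω, ENNReal.ofReal (Real.exp (-a * ((ξ i ω : ℝ) - 1))) ∂μ) (t : ℕ) :
    ENNReal.ofReal (Real.exp (-a)) ≤
      ∫⁻ ω, ENNReal.ofReal (Real.exp (-a * stoppedWalk ξ H t ω)) ∂μ := by
  induction t with
  | zero => simp
  | succ t ih => exact ih.trans (lintegral_exp_stoppedWalk_le_succ hξ hind t (hstep (t + 1)))

lemma measure_le_stoppedWalk_le (hξ : ∀ i, Measurable (ξ i)) (hind : iIndepFun ξ μ)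
    (ha : 0 < a) (hH : 0 < H)
    (hstep : ∀ i, 1 ≤ ∫⁻ ω, ENNReal.ofReal (Real.exp (-a * ((ξ i ω : ℝ) - 1))) ∂μ) (t : ℕ) :
    μ {ω | (H : ℤ) ≤ stoppedWalk ξ H t ω} ≤
      ENNReal.ofReal ((1 - Real.exp (-a)) / (1 - Real.exp (-(a * H)))) := by
  have hexp_lt : Real.exp (-(a * H)) < 1 := Real.exp_lt_one_iff.mpr (by
    simp only [neg_lt_zero]
    positivity)
  refine measure_le_of_ofReal_le_lintegral ?_ (Real.exp_nonneg _) hexp_lt (fun ω hω ↦ ?_)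
    (fun ω ↦ ?_) (ofReal_exp_neg_le_lintegral_exp_stoppedWalk (H := H) hξ hind hstep t)
  · exact measurable_stoppedWalk H (fun i _ ↦ hξ i) (.of_discrete (s := Set.Ici (H : ℤ)))
  · have : (H : ℝ) ≤ stoppedWalk ξ H t ω := by exact_mod_cast hω
    exact ENNReal.ofReal_le_ofReal (Real.exp_le_exp.mpr (by nlinarith))
  · have : (0 : ℝ) ≤ stoppedWalk ξ H t ω := by exact_mod_cast stoppedWalk_nonneg t ω
    exact ENNReal.ofReal_le_one.mpr (Real.exp_le_one_iff.mpr (by nlinarith))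

theorem measure_le_walk_hitTime_le (hξ : ∀ i, Measurable (ξ i)) (hind : iIndepFun ξ μ)
    (ha : 0 < a) (hH : 2 ≤ H)
    (hstep : ∀ i, 1 ≤ ∫⁻ ω, ENNReal.ofReal (Real.exp (-a * ((ξ i ω : ℝ) - 1))) ∂μ) :
    μ {ω | (H : ℤ) ≤ walk ξ (hitTime ξ H ω) ω} ≤
      ENNReal.ofReal ((1 - Real.exp (-a)) / (1 - Real.exp (-(a * H)))) := by
  calc μ {ω | (H : ℤ) ≤ walk ξ (hitTime ξ H ω) ω}
      ≤ μ (⋃ t, {ω | (H : ℤ) ≤ stoppedWalk ξ H t ω}) :=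
        measure_mono (setOf_le_walk_hitTime_subset hH)
    _ = ⨆ t, μ {ω | (H : ℤ) ≤ stoppedWalk ξ H t ω} :=
        (monotone_setOf_le_stoppedWalk hH).measure_iUnion
    _ ≤ _ := iSup_le (measure_le_stoppedWalk_le hξ hind ha (by omega) hstep)

end Submartingale

lemma one_sub_exp_neg_le {a : ℝ} (ha₀ : 0 ≤ a) (ha₁ : a ≤ 1) :
    1 - Real.exp (-a) ≤ a - a ^ 2 / 2 + 2 / 9 * a ^ 3 := by
  have h := Real.exp_bound (x := -a) (by rwa [abs_neg, abs_of_nonneg ha₀]) (n := 3) (by norm_num)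
  simp only [sum_range_succ, sum_range_zero, abs_neg, abs_of_nonneg ha₀] at h
  norm_num [Nat.factorial] at h
  linarith [(abs_le.mp h).1]

lemma exp_neg_add_sq_le_one_sub {x : ℝ} (hx₀ : 0 ≤ x) (hx₁ : x ≤ 1 / 2) :
    Real.exp (-(x + x ^ 2)) ≤ 1 - x := by
  have hquad := Real.quadratic_le_exp_of_nonneg (by positivity : 0 ≤ x + x ^ 2)
  have hpoly : 1 ≤ (1 - x) * (1 + (x + x ^ 2) + (x + x ^ 2) ^ 2 / 2) := by
    nlinarith [mul_le_mul_of_nonneg_right hx₁ (sq_nonneg x),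
      mul_le_mul_of_nonneg_right hx₁ (pow_nonneg hx₀ 3),
      mul_le_mul_of_nonneg_right hx₁ (pow_nonneg hx₀ 4)]
  rw [Real.exp_neg, inv_le_iff_one_le_mul₀ (Real.exp_pos _)]
  nlinarith

lemma exp_neg_le_binomial_mgf {n : ℕ} {a p : ℝ} (ha₀ : 0 < a) (ha₁ : a ≤ 1 / 2) (hp : 0 ≤ p)
    (hnp : n * p = 1 + a / 4) (hn : 18 ≤ n) :
    Real.exp (-a) ≤ (1 - p + p * Real.exp (-a)) ^ n := by
  set u := 1 - Real.exp (-a)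
  set q := p * u
  have hn' : (18 : ℝ) ≤ n := by exact_mod_cast hn
  have hu₀ : 0 ≤ u := by simp only [u, sub_nonneg, Real.exp_le_one_iff]; linarith
  have hu_le : u ≤ a := by linarith [Real.add_one_le_exp (-a)]
  have hu_cubic : u ≤ a - a ^ 2 / 2 + 2 / 9 * a ^ 3 := one_sub_exp_neg_le ha₀.le (by linarith)
  have hp_le : p ≤ 1 / 16 := by nlinarith
  have hq₀ : 0 ≤ q := mul_nonneg hp hu₀
  have hq_le : q ≤ 1 / 2 := by nlinarith
  have hexponent : n * (q + q ^ 2) ≤ a := by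
    have : n * (q + q ^ 2) = (1 + a / 4) * u + (1 + a / 4) * p * u ^ 2 := by
      simp only [q]; rw [← hnp]; ring
    rw [this]
    nlinarith [mul_nonneg hp (sq_nonneg u), sq_nonneg a, mul_le_mul_of_nonneg_left hu_le hu₀]
  calc Real.exp (-a) ≤ Real.exp (-(q + q ^ 2)) ^ n := by
        rw [← Real.exp_nat_mul, Real.exp_le_exp]; linarith
    _ ≤ (1 - q) ^ n := pow_le_pow_left₀ (Real.exp_nonneg _) (exp_neg_add_sq_le_one_sub hq₀ hq_le) n
    _ = (1 - p + p * Real.exp (-a)) ^ n := by simp only [q, u]; ring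

lemma lintegral_binomialMeasure (n : ℕ) (p : ℝ) (f : ℕ → ℝ≥0∞) :
    ∫⁻ k, f k ∂binomialMeasure n p =
      ∑ k ∈ range (n + 1), ENNReal.ofReal (n.choose k * p ^ k * (1 - p) ^ (n - k)) * f k := by
  rw [binomialMeasure, lintegral_sum_measure]
  simp_rw [lintegral_smul_measure, lintegral_dirac, smul_eq_mul]
  refine tsum_eq_sum fun k hk ↦ ?_
  rw [Nat.choose_eq_zero_of_lt (by simpa using hk)]
  simp

lemma lintegral_exp_binomialMeasure {n : ℕ} {p : ℝ} (hp₀ : 0 ≤ p) (hp₁ : p ≤ 1) (a : ℝ) :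
    ∫⁻ k, ENNReal.ofReal (Real.exp (-a * ((k : ℝ) - 1))) ∂binomialMeasure n p =
      ENNReal.ofReal (Real.exp a * (1 - p + p * Real.exp (-a)) ^ n) := by
  have hq : 0 ≤ 1 - p := by linarith
  have hterm (k : ℕ) :
      ENNReal.ofReal (n.choose k * p ^ k * (1 - p) ^ (n - k)) *
          ENNReal.ofReal (Real.exp (-a * ((k : ℝ) - 1))) =
        ENNReal.ofReal
          (Real.exp a * ((p * Real.exp (-a)) ^ k * (1 - p) ^ (n - k) * n.choose k)) := by
    rw [← ENNReal.ofReal_mul (by positivity), mul_pow, ← Real.exp_nat_mul,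
      show -a * ((k : ℝ) - 1) = a + k * -a by ring, Real.exp_add]
    ring_nf
  simp_rw [lintegral_binomialMeasure, hterm]
  rw [← ENNReal.ofReal_sum_of_nonneg fun k _ ↦ by positivity, ← mul_sum, add_comm (1 - p),
    add_pow]

lemma one_le_lintegral_exp_binomialMeasure {n : ℕ} {a p : ℝ} (ha₀ : 0 < a) (ha₁ : a ≤ 1 / 2)
    (hp : 0 ≤ p) (hnp : n * p = 1 + a / 4) (hn : 18 ≤ n) :
    1 ≤ ∫⁻ k, ENNReal.ofReal (Real.exp (-a * ((k : ℝ) - 1))) ∂binomialMeasure n p := by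
  have hp₁ : p ≤ 1 := by
    have : (18 : ℝ) ≤ n := by exact_mod_cast hn
    nlinarith
  rw [lintegral_exp_binomialMeasure hp hp₁, ← ENNReal.ofReal_one]
  refine ENNReal.ofReal_le_ofReal ?_
  calc (1 : ℝ) = Real.exp a * Real.exp (-a) := by rw [← Real.exp_add, add_neg_cancel, Real.exp_zero]
    _ ≤ Real.exp a * (1 - p + p * Real.exp (-a)) ^ n :=
      mul_le_mul_of_nonneg_left (exp_neg_le_binomial_mgf ha₀ ha₁ hp hnp hn) (Real.exp_nonneg a)

lemma one_sub_exp_neg_div_le {a b c : ℝ} (ha : 0 < a) (hb : 0 < b) (hbc : b ≤ a * c) :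
    (1 - Real.exp (-a)) / (1 - Real.exp (-(a * c))) ≤ a / (1 - Real.exp (-b)) := by
  refine div_le_div₀ ha.le (by linarith [Real.add_one_le_exp (-a)]) ?_ (by gcongr)
  rw [sub_pos, Real.exp_lt_one_iff]
  linarith

lemma le_rpow_one_third {x y : ℝ} (hx : 0 ≤ x) (h : x ^ 3 ≤ y) : x ≤ y ^ ((1 : ℝ) / 3) := by
  calc x = (x ^ 3) ^ ((3 : ℕ) : ℝ)⁻¹ := (Real.pow_rpow_inv_natCast hx (by norm_num)).symm
    _ ≤ y ^ ((1 : ℝ) / 3) := by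
      rw [one_div]
      exact_mod_cast Real.rpow_le_rpow (by positivity) h (by norm_num)

/-- **Inequality (10), Nachmias–Peres.** For the Bin(n,p) walk with
`p = (1 + λ n^{-1/3})/n`, `λ > 0`, `H = ⌈n^{1/3}⌉` and `n` large,
`P(S_γ ≥ H) ≤ 4λ n^{-1/3} / (1 - e^{-4λ})`. -/
theorem window_hit_prob_le (lam : ℝ) (hlam : 0 < lam) :
    ∃ N : ℕ, ∀ n : ℕ, N ≤ n →
      ∀ (Ω : Type) (_ : MeasurableSpace Ω) (μ : Measure Ω), IsProbabilityMeasure μ →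
      ∀ ξ : ℕ → Ω → ℕ, (∀ i, Measurable (ξ i)) →
      (∀ i, μ.map (ξ i) =
        binomialMeasure n ((1 + lam * (n : ℝ) ^ (-(1 : ℝ) / 3)) / (n : ℝ))) →
      iIndepFun ξ μ →
      μ {ω | ((⌈(n : ℝ) ^ ((1 : ℝ) / 3)⌉₊ : ℕ) : ℤ) ≤
          walk ξ (hitTime ξ ⌈(n : ℝ) ^ ((1 : ℝ) / 3)⌉₊ ω) ω} ≤
        ENNReal.ofReal (4 * lam * (n : ℝ) ^ (-(1 : ℝ) / 3) /
          (1 - Real.exp (-(4 * lam)))) := by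
  refine ⟨⌈(8 * lam) ^ 3⌉₊ + 18, fun n hN Ω _ μ _ ξ hξ hlaw hind ↦ ?_⟩
  have hn : 18 ≤ n := by omega
  rw [neg_div, Real.rpow_neg (Nat.cast_nonneg n)] at hlaw ⊢
  set r := (n : ℝ) ^ ((1 : ℝ) / 3)
  have hr_lam : 8 * lam ≤ r := le_rpow_one_third (by positivity)
    ((Nat.le_ceil _).trans (by exact_mod_cast (by omega : ⌈(8 * lam) ^ 3⌉₊ ≤ n)))
  have hr_two : 2 ≤ r := le_rpow_one_third (by norm_num) (by
    norm_num
    exact_mod_cast (by omega : 8 ≤ n))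
  set a := 4 * lam * r⁻¹
  have ha₀ : 0 < a := by positivity
  have ha₁ : a ≤ 1 / 2 := by
    rw [mul_inv_le_iff₀ (by linarith)]
    linarith
  have hnp : n * ((1 + lam * r⁻¹) / n) = 1 + a / 4 := by
    simp only [a]
    field_simp
  have hH : 2 ≤ ⌈r⌉₊ := by exact_mod_cast hr_two.trans (Nat.le_ceil r)
  have haH : 4 * lam ≤ a * ⌈r⌉₊ := by
    calc 4 * lam = a * r := by simp only [a]; field_simp
      _ ≤ a * ⌈r⌉₊ := by gcongr; exact Nat.le_ceil r
  have hstep (i : ℕ) : 1 ≤ ∫⁻ ω, ENNReal.ofReal (Real.exp (-a * ((ξ i ω : ℝ) - 1))) ∂μ := by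
    rw [← lintegral_map (measurable_from_top (f := fun k : ℕ ↦
      ENNReal.ofReal (Real.exp (-a * ((k : ℝ) - 1))))) (hξ i), hlaw i]
    exact one_le_lintegral_exp_binomialMeasure ha₀ ha₁ (by positivity) hnp hn
  exact (measure_le_walk_hitTime_le hξ hind ha₀ hH hstep).trans
    (ENNReal.ofReal_le_ofReal (one_sub_exp_neg_div_le ha₀ (by positivity) haH))
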